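/- Let A be an admissible pseudo-Hermitian n×n matrix with eigenvalues λ_p ≥ … ≥ λ_1 > μ_1 ≥ … ≥ μ_q, and fix integers 1 ≤ i_1 < i_2 < … < i_m ≤ p. There exists a flag V_{i_1} ⊂ V_{i_2} ⊂ … ⊂ V_{i_m} of subspaces of ℂⁿ with dim V_{i_j} = i_j and V_{i_m}∖{0} ⊆ ℂⁿ₊ such that every system x_1, …, x_m subordinate to the flag satisfies Σ_{j=1}^m x_j†·A·x_j ≤ Σ_{j=1}^m λ_{i_j}. (Indeed V_{i_j} = span{v_1, …, v_{i_j}} works, where v_1, …, v_p are pseudo-orthonormal eigenvectors for λ_1, …, λ_p.) -/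

import Mathlib

/-! Since `U` preserves the pairing, the columns of `U` belonging to `λ_1, …, λ_p` form a
pseudo-orthonormal family of eigenvectors `v_1, …, v_p` of `A`. Take
`V_{i_j} = span {v_1, …, v_{i_j}}`: in the coordinates `x = Σ c_k v_k` the pairing on this span is
the standard Hermitian form `Σ |c_k|²`, so the span lies in `ℂⁿ₊`, and a vector with `⟨x, x⟩ = 1`
has `x† A x = Σ λ_k |c_k|² ≤ λ_{i_j}`. -/

open Matrix

/-- The signature matrix `J = diag(1,…,1,−1,…,−1)` with `p` ones and `q` minus-ones. -/
noncomputable def Jmat (p q : ℕ) : Matrix (Fin (p + q)) (Fin (p + q)) ℂ :=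
  Matrix.diagonal (fun i => if (i : ℕ) < p then 1 else -1)

/-- The indefinite pairing `⟨z,w⟩ = Σ_{i<p} z_i conj(w_i) − Σ_{i≥p} z_i conj(w_i)`;
equivalently `w† · z` where `x† = (J conj(x))ᵀ`. -/
noncomputable def pairing (p q : ℕ) (z w : Fin (p + q) → ℂ) : ℂ :=
  ∑ i : Fin (p + q),
    (if (i : ℕ) < p then z i * (starRingEnd ℂ) (w i) else -(z i * (starRingEnd ℂ) (w i)))

/-- The diagonal entries of `Λ = diag(λ_p, …, λ_1, μ_1, …, μ_q)`, where `lam` and `mu`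
are 0-indexed: `lam i = λ_{i+1}` and `mu j = μ_{j+1}`. -/
noncomputable def diagEntries (p q : ℕ) (lam : Fin p → ℝ) (mu : Fin q → ℝ) :
    Fin (p + q) → ℂ :=
  fun i =>
    if h : (i : ℕ) < p then ((lam ⟨p - 1 - (i : ℕ), by omega⟩ : ℝ) : ℂ)
    else ((mu ⟨(i : ℕ) - p, by have := i.isLt; omega⟩ : ℝ) : ℂ)

/-- `A` is an admissible pseudo-Hermitian matrix with (real) eigenvalues
`λ_p ≥ … ≥ λ_1 > μ_1 ≥ … ≥ μ_q`, recorded 0-indexed as `lam i = λ_{i+1}` (so `lam` is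
monotone) and `mu j = μ_{j+1}` (so `mu` is antitone), with `λ_1 > μ_1`, and
`A = U Λ U⁻¹` for some invertible `U` with `U J Uᴴ = J`. -/
def IsAdmissible (p q : ℕ) (hp : 0 < p) (hq : 0 < q)
    (A : Matrix (Fin (p + q)) (Fin (p + q)) ℂ)
    (lam : Fin p → ℝ) (mu : Fin q → ℝ) : Prop :=
  A * Jmat p q = Jmat p q * A.conjTranspose ∧
  Monotone lam ∧ Antitone mu ∧ mu ⟨0, hq⟩ < lam ⟨0, hp⟩ ∧
  ∃ U : Matrix (Fin (p + q)) (Fin (p + q)) ℂ,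
    IsUnit U ∧ U * Jmat p q * U.conjTranspose = Jmat p q ∧
    A = U * Matrix.diagonal (diagEntries p q lam mu) * U⁻¹

/-- The Rayleigh ratio `R_A(x) = (x† A x)/(x† x)`, as a real number (for admissible
pseudo-Hermitian `A` both `x† A x` and `x† x` are real). -/
noncomputable def rayleigh (p q : ℕ) (A : Matrix (Fin (p + q)) (Fin (p + q)) ℂ)
    (x : Fin (p + q) → ℂ) : ℝ :=
  (pairing p q (A.mulVec x) x).re / (pairing p q x x).re

/-- A flag `V_{i_1} ⊂ V_{i_2} ⊂ ⋯ ⊂ V_{i_m}` of complex subspaces of `ℂⁿ` with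
`dim V_{i_j} = i_j` (here `idx : Fin m → Fin p` is 0-indexed, so `i_j = idx j + 1`)
and `V_{i_m} ∖ {0} ⊆ ℂⁿ₊`. -/
def IsFlag (p q m : ℕ) (hm : 0 < m) (idx : Fin m → Fin p)
    (V : Fin m → Submodule ℂ (Fin (p + q) → ℂ)) : Prop :=
  (∀ j k : Fin m, j < k → V j < V k) ∧
  (∀ j, Module.finrank ℂ (V j) = (idx j : ℕ) + 1) ∧
  (∀ x ∈ V ⟨m - 1, by omega⟩, x ≠ 0 → 0 < (pairing p q x x).re)

/-- A system of vectors `x_1, …, x_m` subordinate to the flag `V`: `x_j ∈ V_{i_j}`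
and `⟨x_j, x_k⟩ = δ_{jk}`. -/
def IsSubordinate (p q m : ℕ) (V : Fin m → Submodule ℂ (Fin (p + q) → ℂ))
    (x : Fin m → Fin (p + q) → ℂ) : Prop :=
  (∀ j, x j ∈ V j) ∧ ∀ j k, pairing p q (x j) (x k) = if j = k then 1 else 0

lemma Jmat_mul_Jmat (p q : ℕ) : Jmat p q * Jmat p q = 1 := by
  rw [Jmat, diagonal_mul_diagonal, ← diagonal_one]
  congr 1
  funext i
  split_ifs <;> norm_num

lemma pairing_eq_dotProduct (p q : ℕ) (z w : Fin (p + q) → ℂ) :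
    pairing p q z w = star w ⬝ᵥ (Jmat p q *ᵥ z) := by
  refine Finset.sum_congr rfl fun i _ => ?_
  rw [Jmat, mulVec_diagonal]
  split_ifs <;> simp [mul_comm]

/-- Over a commutative ring, `U J Uᴴ = J` makes `J Uᴴ J` a right, hence also a left,
inverse of `U`. -/
lemma Matrix.conjTranspose_mul_mul_eq_of_mul_mul_conjTranspose_eq {n R : Type*} [Fintype n]
    [DecidableEq n] [CommRing R] [StarRing R] {J U : Matrix n n R} (hJ : J * J = 1)
    (hU : U * J * Uᴴ = J) : Uᴴ * J * U = J := by
  have hright : U * (J * Uᴴ * J) = 1 := by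
    rw [← Matrix.mul_assoc, ← Matrix.mul_assoc, hU, hJ]
  have hleft : J * Uᴴ * J * U = 1 := mul_eq_one_comm.mp hright
  calc Uᴴ * J * U = J * J * (Uᴴ * J * U) := by rw [hJ, Matrix.one_mul]
    _ = J * (J * Uᴴ * J * U) := by simp only [Matrix.mul_assoc]
    _ = J := by rw [hleft, Matrix.mul_one]

lemma pairing_mulVec_mulVec (p q : ℕ) {U : Matrix (Fin (p + q)) (Fin (p + q)) ℂ}
    (hU : Uᴴ * Jmat p q * U = Jmat p q) (y z : Fin (p + q) → ℂ) :
    pairing p q (U *ᵥ y) (U *ᵥ z) = pairing p q y z := by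
  rw [pairing_eq_dotProduct, pairing_eq_dotProduct, star_mulVec, mulVec_mulVec,
    dotProduct_mulVec, vecMul_vecMul, ← Matrix.mul_assoc, hU, dotProduct_mulVec]

lemma pairing_single_single (p q : ℕ) (i j : Fin (p + q)) (hi : (i : ℕ) < p) :
    pairing p q (Pi.single i 1) (Pi.single j 1) = if i = j then 1 else 0 := by
  rw [pairing_eq_dotProduct, Jmat, diagonal_mulVec_single, dotProduct_single]
  by_cases hij : i = j
  · subst hij; simp [hi]
  · simp [hij]

lemma diagEntries_castAdd_rev (p q : ℕ) (lam : Fin p → ℝ) (mu : Fin q → ℝ) (k : Fin p) :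
    diagEntries p q lam mu (Fin.castAdd q k.rev) = lam k := by
  have hk := k.isLt
  rw [diagEntries, dif_pos (by simp only [Fin.val_castAdd, Fin.val_rev]; omega)]
  congr 2
  ext
  simp only [Fin.val_castAdd, Fin.val_rev]
  omega

lemma pairing_zero_left (p q : ℕ) (w : Fin (p + q) → ℂ) : pairing p q 0 w = 0 := by
  simp [pairing]

lemma pairing_sum_smul_left (p q : ℕ) {ι : Type*} [Fintype ι] (c : ι → ℂ)
    (v : ι → Fin (p + q) → ℂ) (w : Fin (p + q) → ℂ) :
    pairing p q (∑ a, c a • v a) w = ∑ a, c a * pairing p q (v a) w := by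
  simp only [pairing, Finset.sum_apply, Pi.smul_apply, smul_eq_mul, Finset.mul_sum]
  rw [Finset.sum_comm]
  refine Finset.sum_congr rfl fun i _ => ?_
  split_ifs <;> simp [Finset.sum_mul, mul_assoc]

lemma pairing_sum_smul_right (p q : ℕ) {ι : Type*} [Fintype ι] (c : ι → ℂ)
    (v : ι → Fin (p + q) → ℂ) (z : Fin (p + q) → ℂ) :
    pairing p q z (∑ a, c a • v a) = ∑ a, starRingEnd ℂ (c a) * pairing p q z (v a) := by
  simp only [pairing, Finset.sum_apply, Pi.smul_apply, smul_eq_mul, Finset.mul_sum]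
  rw [Finset.sum_comm]
  refine Finset.sum_congr rfl fun i _ => ?_
  split_ifs <;> simp [map_sum, Finset.mul_sum] <;> ring_nf

def IsPseudoOrthonormal (p q : ℕ) {ι : Type*} [DecidableEq ι] (v : ι → Fin (p + q) → ℂ) :
    Prop :=
  ∀ a b, pairing p q (v a) (v b) = if a = b then 1 else 0

namespace IsPseudoOrthonormal

variable {p q : ℕ} {ι : Type*} [DecidableEq ι] {v : ι → Fin (p + q) → ℂ}

lemma comp {κ : Type*} [DecidableEq κ]
    (hv : IsPseudoOrthonormal p q v) {f : κ → ι} (hf : Function.Injective f) :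
    IsPseudoOrthonormal p q (v ∘ f) := fun a b =>
  (hv (f a) (f b)).trans (by simp only [hf.eq_iff])

variable [Fintype ι]

lemma pairing_sum_smul_sum_smul (hv : IsPseudoOrthonormal p q v) (c d : ι → ℂ) :
    pairing p q (∑ a, c a • v a) (∑ a, d a • v a) = ∑ a, c a * starRingEnd ℂ (d a) := by
  simp [pairing_sum_smul_left, pairing_sum_smul_right, hv _ _, mul_comm]

lemma linearIndependent (hv : IsPseudoOrthonormal p q v) : LinearIndependent ℂ v := by
  refine Fintype.linearIndependent_iff.mpr fun c hc b => ?_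
  have hcoeff : pairing p q (∑ a, c a • v a) (v b) = c b := by
    simp [pairing_sum_smul_left, hv _ _]
  rwa [hc, pairing_zero_left, eq_comm] at hcoeff

lemma re_pairing_self_sum_smul (hv : IsPseudoOrthonormal p q v) (c : ι → ℂ) :
    (pairing p q (∑ a, c a • v a) (∑ a, c a • v a)).re = ∑ a, Complex.normSq (c a) := by
  simp [hv.pairing_sum_smul_sum_smul, Complex.mul_conj]

lemma pairing_self_pos_of_mem_span (hv : IsPseudoOrthonormal p q v) {x : Fin (p + q) → ℂ}
    (hx : x ∈ Submodule.span ℂ (Set.range v)) (hx0 : x ≠ 0) : 0 < (pairing p q x x).re := by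
  obtain ⟨c, rfl⟩ := (Submodule.mem_span_range_iff_exists_fun ℂ).mp hx
  obtain ⟨a, ha⟩ : ∃ a, c a ≠ 0 := by
    by_contra! h
    exact hx0 (by simp [h])
  rw [hv.re_pairing_self_sum_smul]
  exact Finset.sum_pos' (fun a _ => Complex.normSq_nonneg _)
    ⟨a, Finset.mem_univ a, Complex.normSq_pos.mpr ha⟩

lemma re_pairing_mulVec_le_of_mem_span (hv : IsPseudoOrthonormal p q v)
    {A : Matrix (Fin (p + q)) (Fin (p + q)) ℂ} {lam : ι → ℝ} {M : ℝ}
    (hA : ∀ a, A *ᵥ v a = (lam a : ℂ) • v a) (hM : ∀ a, lam a ≤ M) {x : Fin (p + q) → ℂ}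
    (hx : x ∈ Submodule.span ℂ (Set.range v)) (hxx : pairing p q x x = 1) :
    (pairing p q (A *ᵥ x) x).re ≤ M := by
  obtain ⟨c, rfl⟩ := (Submodule.mem_span_range_iff_exists_fun ℂ).mp hx
  have hnorm : ∑ a, Complex.normSq (c a) = 1 := by
    rw [← hv.re_pairing_self_sum_smul, hxx, Complex.one_re]
  have hAx : A *ᵥ ∑ a, c a • v a = ∑ a, (c a * lam a) • v a := by
    simp only [Matrix.mulVec_sum, Matrix.mulVec_smul, hA, smul_smul]
  calc (pairing p q (A *ᵥ ∑ a, c a • v a) (∑ a, c a • v a)).re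
      = ∑ a, lam a * Complex.normSq (c a) := by
        rw [hAx, hv.pairing_sum_smul_sum_smul, Complex.re_sum]
        refine Finset.sum_congr rfl fun a _ => ?_
        rw [mul_right_comm, Complex.mul_conj, mul_comm]
        norm_cast
    _ ≤ ∑ a, M * Complex.normSq (c a) :=
        Finset.sum_le_sum fun a _ => mul_le_mul_of_nonneg_right (hM a) (Complex.normSq_nonneg _)
    _ = M := by rw [← Finset.mul_sum, hnorm, mul_one]

end IsPseudoOrthonormal

lemma IsAdmissible.exists_pseudoOrthonormal_eigenvectors {p q : ℕ} {hp : 0 < p} {hq : 0 < q}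
    {A : Matrix (Fin (p + q)) (Fin (p + q)) ℂ} {lam : Fin p → ℝ} {mu : Fin q → ℝ}
    (hA : IsAdmissible p q hp hq A lam mu) :
    ∃ v : Fin p → Fin (p + q) → ℂ,
      IsPseudoOrthonormal p q v ∧ ∀ k, A *ᵥ v k = (lam k : ℂ) • v k := by
  obtain ⟨-, -, -, -, U, hU, hUJ, rfl⟩ := hA
  have hUJU := conjTranspose_mul_mul_eq_of_mul_mul_conjTranspose_eq (Jmat_mul_Jmat p q) hUJ
  refine ⟨fun k => U *ᵥ Pi.single (Fin.castAdd q k.rev) 1, fun a b => ?_, fun k => ?_⟩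
  · rw [pairing_mulVec_mulVec p q hUJU, pairing_single_single _ _ _ _ (by simp; omega)]
    simp [Fin.rev_inj]
  · rw [mulVec_mulVec, nonsing_inv_mul_cancel_right _ _ ((isUnit_iff_isUnit_det U).mp hU),
      ← mulVec_mulVec, diagonal_mulVec_single, diagEntries_castAdd_rev, ← mulVec_smul,
      ← smul_eq_mul, Pi.single_smul']

lemma isFlag_span_Iic {p q m : ℕ} (hm : 0 < m) {idx : Fin m → Fin p} (hidx : StrictMono idx)
    {v : Fin p → Fin (p + q) → ℂ} (hv : IsPseudoOrthonormal p q v) :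
    IsFlag p q m hm idx fun j => Submodule.span ℂ (Set.range fun t : Finset.Iic (idx j) => v t) := by
  have hsub (k : Fin p) : IsPseudoOrthonormal p q (fun t : Finset.Iic k => v t) :=
    hv.comp Subtype.val_injective
  have hrank (j : Fin m) :
      Module.finrank ℂ (Submodule.span ℂ (Set.range fun t : Finset.Iic (idx j) => v t)) =
        idx j + 1 := by
    rw [finrank_span_eq_card (hsub _).linearIndependent, Fintype.card_coe, Fin.card_Iic]
  refine ⟨fun j k hjk => ?_, hrank, fun x hx hx0 => (hsub _).pairing_self_pos_of_mem_span hx hx0⟩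
  refine Submodule.lt_of_le_of_finrank_lt_finrank (Submodule.span_mono ?_) ?_
  · rintro _ ⟨t, rfl⟩
    exact ⟨⟨t, Finset.Iic_subset_Iic.mpr (hidx hjk).le t.2⟩, rfl⟩
  · rw [hrank, hrank]
    exact Nat.succ_lt_succ (hidx hjk)

/-- there is a flag `V_{i_1} ⊂ ⋯ ⊂ V_{i_m}` (with `dim V_{i_j} = i_j`
and `V_{i_m}∖{0} ⊆ ℂⁿ₊`) such that every subordinate system `x_1, …, x_m` satisfies
`Σ_j x_j† A x_j ≤ Σ_j λ_{i_j}`. -/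
theorem exists_flag_with_small_subordinate_sums
    (p q : ℕ) (hp : 0 < p) (hq : 0 < q)
    (A : Matrix (Fin (p + q)) (Fin (p + q)) ℂ)
    (lam : Fin p → ℝ) (mu : Fin q → ℝ)
    (hA : IsAdmissible p q hp hq A lam mu)
    (m : ℕ) (hm : 0 < m) (idx : Fin m → Fin p) (hidx : StrictMono idx) :
    ∃ V : Fin m → Submodule ℂ (Fin (p + q) → ℂ), IsFlag p q m hm idx V ∧
      ∀ x : Fin m → Fin (p + q) → ℂ, IsSubordinate p q m V x →
        ∑ j : Fin m, (pairing p q (A.mulVec (x j)) (x j)).re ≤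
          ∑ j : Fin m, lam (idx j) := by
  obtain ⟨v, hv, hAv⟩ := hA.exists_pseudoOrthonormal_eigenvectors
  refine ⟨_, isFlag_span_Iic hm hidx hv, fun x ⟨hmem, horth⟩ => Finset.sum_le_sum fun j _ => ?_⟩
  exact (hv.comp Subtype.val_injective).re_pairing_mulVec_le_of_mem_span (fun t => hAv t)
    (fun t => hA.2.1 (Finset.mem_Iic.mp t.2)) (hmem j) (by simpa using horth j j)
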